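/- Let G be a graph in standard Cohen–Macaulay very well-covered form on {x_1,…,x_n,y_1,…,y_n}. Then the cover ideal I(G)^∨ ⊂ S = K[x_1,…,x_n,y_1,…,y_n] has linear quotients with respect to the order of its minimal monomial generators given by decreasing lexicographic order induced by x_n > y_n > x_{n−1} > y_{n−1} > ⋯ > x_1 > y_1; that is, listing G(I(G)^∨) = {u_1 >_lex u_2 >_lex ⋯ >_lex u_m} in this order, each colon ideal (u_1,…,u_{ℓ−1}) : u_ℓ (2 ≤ ℓ ≤ m) is generated by a subset of the variables. (This is the case k = 0 of the paper's Theorem 4.1.) -/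

import Mathlib

/-!
For a graph in standard CM very well-covered form, a minimal vertex cover contains exactly one
of `x_i, y_i` for every `i`: if it contained both, the private neighbours of `x_i` and `y_i`
outside the cover would be joined by condition (v). Now let `D >_lex C` be minimal covers and
`j` the least index with `x_j ∈ D \ C`. Exchanging `y_j` for `x_j` in `C` gives a cover `E`,
since a neighbour `x_l` (`l < j`) of `y_j` lies in `D` and hence, by the choice of `j`, in `C`;
and `E >_lex C`. So `u_E` divides `x_j u_C`, and every monomial `m` with `m u_C` divisible
by `u_D` is divisible by `x_j`: the colon ideal is generated by such variables.
-/

/-- `C` is a vertex cover of the graph `G`. -/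
def IsVertexCover {V : Type*} (G : SimpleGraph V) (C : Finset V) : Prop :=
  ∀ ⦃v w : V⦄, G.Adj v w → v ∈ C ∨ w ∈ C

/-- `C` is a minimal vertex cover of the graph `G`. -/
def IsMinVertexCover {V : Type*} (G : SimpleGraph V) (C : Finset V) : Prop :=
  IsVertexCover G C ∧ ∀ D ⊆ C, IsVertexCover G D → D = C

/-- `C` is an independent set of the graph `G`. -/
def IsIndepSet {V : Type*} (G : SimpleGraph V) (C : Finset V) : Prop :=
  ∀ ⦃v w : V⦄, v ∈ C → w ∈ C → ¬ G.Adj v w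

/-- `C` is a maximal independent set of the graph `G`. -/
def IsMaxIndepSet {V : Type*} (G : SimpleGraph V) (C : Finset V) : Prop :=
  IsIndepSet G C ∧ ∀ D, C ⊆ D → IsIndepSet G D → D = C

/-- A graph on the vertex set `{x_i, y_i : i ∈ ι}` (with `x_i = Sum.inl i` and
`y_i = Sum.inr i`) is in standard Cohen–Macaulay very well-covered form if it satisfies
conditions (i)–(v) of the Crupi–Rinaldo–Terai characterization. -/
def StdCMVWC {ι : Type*} [LinearOrder ι] [Fintype ι] (G : SimpleGraph (ι ⊕ ι)) : Prop :=
  IsMinVertexCover G (Finset.univ.image Sum.inl) ∧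
  IsMaxIndepSet G (Finset.univ.image Sum.inr) ∧
  (∀ i : ι, G.Adj (Sum.inl i) (Sum.inr i)) ∧
  (∀ i j : ι, G.Adj (Sum.inl i) (Sum.inr j) → i ≤ j) ∧
  (∀ i j : ι, G.Adj (Sum.inl i) (Sum.inr j) → ¬ G.Adj (Sum.inl i) (Sum.inl j)) ∧
  (∀ (i j k : ι) (z : ι ⊕ ι), (z = Sum.inl i ∨ z = Sum.inr i) →
    i ≠ j → j ≠ k → i ≠ k →
    G.Adj z (Sum.inl j) → G.Adj (Sum.inr j) (Sum.inl k) → G.Adj z (Sum.inl k))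


open MvPolynomial

/-- The variable order `x_n > y_n > x_{n-1} > y_{n-1} > ⋯ > x_1 > y_1`:
`v < w` iff the index of `v` is smaller than that of `w`, or `v = y_i` and `w = x_i`. -/
def varLt {m : ℕ} (v w : Fin m ⊕ Fin m) : Prop :=
  Sum.elim id id v < Sum.elim id id w ∨ ∃ i, v = Sum.inr i ∧ w = Sum.inl i

/-- `C >_lex D` for the squarefree monomials `∏_{v∈C} v` and `∏_{v∈D} v`, in the
lexicographic order induced by `x_n > y_n > ⋯ > x_1 > y_1`: at the greatest variable
where the two monomials differ, the one of `C` occurs. -/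
def CoverLexGT {m : ℕ} (C D : Finset (Fin m ⊕ Fin m)) : Prop :=
  ∃ v, v ∈ C ∧ v ∉ D ∧ ∀ w, varLt v w → (w ∈ C ↔ w ∈ D)


namespace MvPolynomial
variable {σ R : Type*} [CommSemiring R]

theorem prod_X_eq_monomial (C : Finset σ) :
    ∏ v ∈ C, (X v : MvPolynomial σ R) = monomial (∑ v ∈ C, Finsupp.single v 1) 1 := by
  rw [monomial_sum_one]; rfl

theorem sum_single_one_apply_of_mem {C : Finset σ} {v : σ} (hv : v ∈ C) :
    (∑ w ∈ C, Finsupp.single w 1) v = 1 := by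
  classical simp [Finsupp.finsetSum_apply, Finsupp.single_apply, hv]

theorem sum_single_one_apply_of_notMem {C : Finset σ} {v : σ} (hv : v ∉ C) :
    (∑ w ∈ C, Finsupp.single w 1) v = 0 := by
  classical simp [Finsupp.finsetSum_apply, Finsupp.single_apply, hv]

theorem prod_X_insert_dvd [DecidableEq σ] (v : σ) (C : Finset σ) :
    ∏ w ∈ insert v C, (X w : MvPolynomial σ R) ∣ X v * ∏ w ∈ C, X w := by
  by_cases hv : v ∈ C
  · rw [Finset.insert_eq_of_mem hv]; exact dvd_mul_left _ _
  · rw [Finset.prod_insert hv]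

theorem colon_span_prod_X_eq_span_X [DecidableEq σ] (𝒟 : Set (Finset σ)) (C : Finset σ)
    (h𝒟 : ∀ D ∈ 𝒟, ∃ v ∈ D, v ∉ C ∧ ∃ E ∈ 𝒟, E ⊆ insert v C) :
    (Ideal.span ((fun D => ∏ v ∈ D, X v) '' 𝒟)).colon
        ((Ideal.span {∏ v ∈ C, X v} : Ideal (MvPolynomial σ R)) : Set (MvPolynomial σ R)) =
      Ideal.span (X '' {v | ∃ E ∈ 𝒟, E ⊆ insert v C}) := by
  set J : Ideal (MvPolynomial σ R) := Ideal.span ((fun D => ∏ v ∈ D, X v) '' 𝒟)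
  have mem_colon {f} : f ∈ J.colon (Ideal.span {∏ v ∈ C, X v} : Ideal (MvPolynomial σ R)) ↔
      f * ∏ v ∈ C, X v ∈ J := by
    rw [Ideal.colon_span, Submodule.mem_colon_singleton, smul_eq_mul]
  apply le_antisymm
  · intro f hf
    have hJ : J = Ideal.span ((fun s => monomial s (1 : R)) ''
        ((fun D : Finset σ => ∑ v ∈ D, Finsupp.single v 1) '' 𝒟)) := by
      simp only [J, Set.image_image, prod_X_eq_monomial]
    rw [mem_colon, hJ, prod_X_eq_monomial, mem_ideal_span_monomial_image] at hf
    refine mem_ideal_span_X_image.mpr fun m hm => ?_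
    obtain ⟨_, ⟨D, hD, rfl⟩, hDle⟩ := hf (m + ∑ v ∈ C, Finsupp.single v 1) <| by
      rwa [mem_support_iff, coeff_mul_monomial, mul_one, ← mem_support_iff]
    obtain ⟨v, hvD, hvC, hexch⟩ := h𝒟 D hD
    have hv := hDle v
    rw [Finsupp.add_apply, sum_single_one_apply_of_mem hvD,
      sum_single_one_apply_of_notMem hvC] at hv
    exact ⟨v, hexch, by omega⟩
  · rw [Ideal.span_le]
    rintro _ ⟨v, ⟨E, hE, hEsub⟩, rfl⟩
    exact mem_colon.mpr <| J.mem_of_dvd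
      ((Finset.prod_dvd_prod_of_subset _ _ _ hEsub).trans (prod_X_insert_dvd v C))
      (Ideal.subset_span ⟨E, hE, rfl⟩)

end MvPolynomial

section VertexCover
variable {V : Type*} {G : SimpleGraph V}

theorem IsVertexCover.of_erase_subset [DecidableEq V] {C E : Finset V} (hC : IsVertexCover G C)
    {u : V} (hCE : C.erase u ⊆ E) (hu : ∀ w, G.Adj u w → w ∈ E) : IsVertexCover G E := by
  intro a b hab
  rcases hC hab with ha | hb
  · by_cases hau : a = u
    · exact .inr (hu b (hau ▸ hab))
    · exact .inl (hCE (Finset.mem_erase.2 ⟨hau, ha⟩))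
  · by_cases hbu : b = u
    · exact .inl (hu a (hbu ▸ hab.symm))
    · exact .inr (hCE (Finset.mem_erase.2 ⟨hbu, hb⟩))

theorem IsMinVertexCover.exists_adj_notMem {C : Finset V} (hC : IsMinVertexCover G C) {v : V}
    (hv : v ∈ C) : ∃ w, G.Adj v w ∧ w ∉ C := by
  classical
  by_contra! h
  have hcov : IsVertexCover G (C.erase v) :=
    hC.1.of_erase_subset subset_rfl fun w hvw => Finset.mem_erase.2 ⟨hvw.ne.symm, h w hvw⟩
  exact C.notMem_erase v ((hC.2 _ (C.erase_subset v) hcov).symm ▸ hv)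

end VertexCover

open Sum

namespace StdCMVWC
variable {ι : Type*} [LinearOrder ι] [Fintype ι] {G : SimpleGraph (ι ⊕ ι)}
  {C D : Finset (ι ⊕ ι)}

theorem not_adj_inr_inr (hG : StdCMVWC G) (i j : ι) : ¬ G.Adj (inr i) (inr j) :=
  hG.2.1.1 (Finset.mem_image_of_mem _ (Finset.mem_univ i))
    (Finset.mem_image_of_mem _ (Finset.mem_univ j))

theorem adj_inl_inr_self (hG : StdCMVWC G) (i : ι) : G.Adj (inl i) (inr i) :=
  hG.2.2.1 i

theorem le_of_adj_inl_inr (hG : StdCMVWC G) {i j : ι} (h : G.Adj (inl i) (inr j)) : i ≤ j :=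
  hG.2.2.2.1 i j h

theorem inr_notMem_of_inl_mem (hG : StdCMVWC G) (hC : IsMinVertexCover G C) {i : ι}
    (hx : inl i ∈ C) : inr i ∉ C := by
  have ⟨_, _, _, _, hxx, htrans⟩ := hG
  intro hy
  obtain ⟨w, hyw, hw⟩ := hC.exists_adj_notMem hy
  obtain ⟨j, rfl⟩ : ∃ j, w = inl j := by
    cases w with
    | inl j => exact ⟨j, rfl⟩
    | inr j => exact absurd hyw (hG.not_adj_inr_inr i j)
  have hji : j < i := (hG.le_of_adj_inl_inr hyw.symm).lt_of_ne (by rintro rfl; exact hw hx)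
  obtain ⟨z, hxz, hz⟩ := hC.exists_adj_notMem hx
  obtain ⟨k, hzk⟩ : ∃ k, z = inl k ∨ z = inr k := by cases z <;> simp
  have hki : k ≠ i := by rintro rfl; rcases hzk with rfl | rfl <;> contradiction
  have hkj : k ≠ j := by
    rintro rfl
    rcases hzk with rfl | rfl
    · exact hxx k i hyw.symm hxz.symm
    · exact (hG.le_of_adj_inl_inr hxz).not_gt hji
  exact (hC.1 (htrans k i j z hzk hki hji.ne' hkj hxz.symm hyw)).elim hz hw

theorem isMinVertexCover_iff (hG : StdCMVWC G) :
    IsMinVertexCover G C ↔ IsVertexCover G C ∧ ∀ i, inl i ∈ C → inr i ∉ C := by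
  refine ⟨fun hC => ⟨hC.1, fun i => hG.inr_notMem_of_inl_mem hC⟩,
    fun ⟨hcov, hpair⟩ => ⟨hcov, fun D hDC hD => hDC.antisymm fun v hv => ?_⟩⟩
  cases v with
  | inl i => exact (hD (hG.adj_inl_inr_self i)).resolve_right fun h => hpair i hv (hDC h)
  | inr i => exact (hD (hG.adj_inl_inr_self i)).resolve_left fun h => hpair i (hDC h) hv

theorem isMinVertexCover_insert_erase (hG : StdCMVWC G) (hC : IsMinVertexCover G C)
    (hD : IsMinVertexCover G D) {j : ι} (hjD : inl j ∈ D)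
    (hmin : ∀ l < j, inl l ∈ D → inl l ∈ C) :
    IsMinVertexCover G (insert (inl j) (C.erase (inr j))) := by
  rw [hG.isMinVertexCover_iff]
  refine ⟨hC.1.of_erase_subset (Finset.subset_insert _ _) fun w hyw => ?_, fun i hi => ?_⟩
  · cases w with
    | inr m => exact absurd hyw (hG.not_adj_inr_inr j m)
    | inl l =>
      rcases (hG.le_of_adj_inl_inr hyw.symm).lt_or_eq with hlj | rfl
      · have hlD : inl l ∈ D := (hD.1 hyw).resolve_left (hG.inr_notMem_of_inl_mem hD hjD)
        simp [hmin l hlj hlD]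
      · exact Finset.mem_insert_self _ _
  · by_cases hij : i = j
    · simp [hij]
    · have hiC : inl i ∈ C := by simpa [hij] using hi
      simpa [hij] using hG.inr_notMem_of_inl_mem hC hiC

end StdCMVWC

section Lex
variable {m : ℕ} {C D : Finset (Fin m ⊕ Fin m)}

theorem coverLexGT_insert_erase {j : Fin m} (hjC : inl j ∉ C) :
    CoverLexGT (insert (inl j) (C.erase (inr j))) C := by
  refine ⟨inl j, Finset.mem_insert_self _ _, hjC, fun w hw => ?_⟩
  rcases hw with hlt | ⟨i, hi, -⟩
  · have hwx : w ≠ inl j := by rintro rfl; exact lt_irrefl _ hlt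
    have hwy : w ≠ inr j := by rintro rfl; exact lt_irrefl _ hlt
    simp [hwx, hwy]
  · cases hi

variable {G : SimpleGraph (Fin m ⊕ Fin m)}

theorem StdCMVWC.exists_inl_mem_notMem_of_coverLexGT (hG : StdCMVWC G)
    (hC : IsMinVertexCover G C) (hD : IsMinVertexCover G D) (h : CoverLexGT D C) :
    ∃ i, inl i ∈ D ∧ inl i ∉ C := by
  obtain ⟨v, hvD, hvC, hagree⟩ := h
  cases v with
  | inl i => exact ⟨i, hvD, hvC⟩
  | inr i =>
    have hxC : inl i ∈ C := (hC.1 (hG.adj_inl_inr_self i)).resolve_right hvC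
    have hxD : inl i ∈ D := (hagree (inl i) (.inr ⟨i, rfl, rfl⟩)).2 hxC
    exact absurd hvD (hG.inr_notMem_of_inl_mem hD hxD)

theorem StdCMVWC.exists_exchange_of_coverLexGT (hG : StdCMVWC G) (hC : IsMinVertexCover G C)
    (hD : IsMinVertexCover G D) (h : CoverLexGT D C) :
    ∃ j, inl j ∈ D ∧ inl j ∉ C ∧ IsMinVertexCover G (insert (inl j) (C.erase (inr j))) := by
  obtain ⟨j, ⟨hjD, hjC⟩, hmin⟩ := wellFounded_lt.has_min {j | inl j ∈ D ∧ inl j ∉ C}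
    (hG.exists_inl_mem_notMem_of_coverLexGT hC hD h)
  refine ⟨j, hjD, hjC, hG.isMinVertexCover_insert_erase hC hD hjD fun l hlj hlD => ?_⟩
  by_contra hlC
  exact hmin l ⟨hlD, hlC⟩ hlj

end Lex

/-- The cover ideal of a graph in standard CM very well-covered form has linear quotients
with respect to the decreasing lexicographic order on its minimal monomial generators
induced by `x_n > y_n > x_{n-1} > y_{n-1} > ⋯ > x_1 > y_1`: for each minimal vertex
cover `C`, the colon ideal of the span of the lex-earlier generators by `∏_{v∈C} v` is
generated by a subset of the variables. -/
theorem stmt8 (n : ℕ) (K : Type*) [Field K]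
    (G : SimpleGraph (Fin (n + 1) ⊕ Fin (n + 1))) (hG : StdCMVWC G) :
    ∀ C : Finset (Fin (n + 1) ⊕ Fin (n + 1)), IsMinVertexCover G C →
      ∃ T : Set (Fin (n + 1) ⊕ Fin (n + 1)),
        Submodule.colon
          (Ideal.span {p : MvPolynomial (Fin (n + 1) ⊕ Fin (n + 1)) K |
            ∃ D, IsMinVertexCover G D ∧ CoverLexGT D C ∧ p = ∏ v ∈ D, X v})
          ((Ideal.span {∏ v ∈ C, X v} : Ideal (MvPolynomial (Fin (n + 1) ⊕ Fin (n + 1)) K)) :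
            Set (MvPolynomial (Fin (n + 1) ⊕ Fin (n + 1)) K))
        = Ideal.span ((fun v => (X v : MvPolynomial (Fin (n + 1) ⊕ Fin (n + 1)) K)) '' T) := by
  classical
  intro C hC
  have hgens : {p : MvPolynomial (Fin (n + 1) ⊕ Fin (n + 1)) K |
      ∃ D, IsMinVertexCover G D ∧ CoverLexGT D C ∧ p = ∏ v ∈ D, X v} =
      (fun D => ∏ v ∈ D, X v) '' {D | IsMinVertexCover G D ∧ CoverLexGT D C} := by
    ext p
    simp [and_assoc, eq_comm]
  rw [hgens]
  refine ⟨_, MvPolynomial.colon_span_prod_X_eq_span_X _ C ?_⟩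
  rintro D ⟨hD, hDC⟩
  obtain ⟨j, hjD, hjC, hE⟩ := hG.exists_exchange_of_coverLexGT hC hD hDC
  exact ⟨inl j, hjD, hjC, _, ⟨hE, coverLexGT_insert_erase hjC⟩,
    Finset.insert_subset_insert _ (C.erase_subset _)⟩
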